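/- (Corollary 4.9, indistinguishability with respect to first and second moments on the unit ball.) Let Y = {y ∈ ℝ^d : ‖y‖_2 ≤ 1}, let W := ℝ^d × Sym_d(ℝ) with inner product ⟨(v,Q),(v′,Q′)⟩ := ⟨v,v′⟩ + Tr(Q Q′), let s : Y → W be s(y) := (y, y y^⊤), and let Z := {(v,Q) ∈ W : there exists a Borel probability measure μ on Y with ∫ y dμ = v and ∫ y y^⊤ dμ = Q}. Suppose ‖Φ(x,p)‖_op² ≤ G for all x ∈ X, p ∈ Z. Let y_1,…,y_T ∈ Y be realized outcomes with targets z_t := s(y_t), suppose the EVI condition holds with tolerances ε_t ≤ 4G, and suppose for each t and each p in the support of D_t, μ_{t,p} is a finitely supported probability measure on Y with E_{ỹ∼μ_{t,p}}[s(ỹ)] = p. Then for every h ∈ H, the distinguisher f(x,p,y) := ⟨h, Φ(x,p)(s(y))⟩_H satisfies OIGap_T(f) ≤ 4·‖h‖_H·sqrt(T·G). -/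

import Mathlib

open scoped BigOperators RealInnerProductSpace
open MeasureTheory

/-- A finitely supported probability distribution, given by finitely many
weighted atoms. -/
structure FinDist (α : Type*) where
  n : ℕ
  w : Fin n → ℝ
  pt : Fin n → α
  w_nonneg : ∀ i, 0 ≤ w i
  w_sum : ∑ i, w i = 1

namespace FinDist

noncomputable def exp {α V : Type*} [AddCommMonoid V] [Module ℝ V]
    (D : FinDist α) (f : α → V) : V :=
  ∑ i, D.w i • f (D.pt i)

def support {α : Type*} (D : FinDist α) : Set α :=
  {a | ∃ i, D.w i ≠ 0 ∧ D.pt i = a}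

end FinDist

/-- The space of symmetric `d × d` real matrices (as a subspace of the
Euclidean space of all `d × d` matrices with the Frobenius inner product). -/
def symMatrices (d : ℕ) : Submodule ℝ (EuclideanSpace ℝ (Fin d × Fin d)) where
  carrier := {Q | ∀ i j, Q (i, j) = Q (j, i)}
  add_mem' := by
    intro A B hA hB i j
    show A (i, j) + B (i, j) = A (j, i) + B (j, i)
    rw [hA i j, hB i j]
  zero_mem' := by intro i j; rfl
  smul_mem' := by
    intro c A hA i j
    show c * A (i, j) = c * A (j, i)
    rw [hA i j]

/-- `W = ℝ^d × Sym_d(ℝ)` with inner product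
`⟨(v,Q),(v',Q')⟩ = ⟨v,v'⟩ + Tr(QQ')`. -/
abbrev Wspace (d : ℕ) :=
  WithLp 2 (EuclideanSpace ℝ (Fin d) × symMatrices d)

/-- The statistic map `s(y) = (y, y yᵀ)`. -/
noncomputable def sVec (d : ℕ) (y : EuclideanSpace ℝ (Fin d)) : Wspace d :=
  (WithLp.equiv 2 (EuclideanSpace ℝ (Fin d) × symMatrices d)).symm
    (y, ⟨(WithLp.equiv 2 (∀ _ : Fin d × Fin d, ℝ)).symm fun q => y q.1 * y q.2,
      fun i j => mul_comm (y i) (y j)⟩)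

/-- The set of pairs of first and second moments of Borel probability measures
on the closed unit ball of `ℝ^d`. -/
def ballMomentSet (d : ℕ) : Set (Wspace d) :=
  {p | ∃ μ : Measure (EuclideanSpace ℝ (Fin d)), IsProbabilityMeasure μ ∧
    μ {y : EuclideanSpace ℝ (Fin d) | ‖y‖ ≤ 1}ᶜ = 0 ∧
    p.ofLp.1 = (∫ y, y ∂μ) ∧
    ∀ i j, (p.ofLp.2 : EuclideanSpace ℝ (Fin d × Fin d)) (i, j) = ∫ y, y i * y j ∂μ}

/-!
The gap equals `⟪h, M_T⟫`: since `E_{μ_{t,p}} s = p`, the second sum is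
`Σ_t E_{D_t} ⟪h, Φ(x_t,p) p⟫`. Expanding `‖M_{t+1}‖² = ‖M_t‖² + 2⟪M_t, w_t⟫ + ‖w_t‖²`, the EVI condition at `z = s(y_t)` bounds the
cross term by `ε_t ≤ 4G`, and `‖w_t‖² ≤ G · (2√2)² = 8G` because `s` maps the unit ball into the
ball of radius `√2` (`‖s(y)‖² = ‖y‖² + ‖y‖⁴`), hence so do the forecasts, being averages of `s`.
So `‖M_T‖² ≤ 16TG`, and Cauchy–Schwarz finishes.
-/

open Finset

namespace FinDist

variable {α V V' : Type*}

lemma exp_congr [AddCommMonoid V] [Module ℝ V] (D : FinDist α) {f g : α → V}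
    (hfg : ∀ a ∈ D.support, f a = g a) : D.exp f = D.exp g := by
  refine sum_congr rfl fun i _ => ?_
  by_cases hw : D.w i = 0
  · simp [hw]
  · rw [hfg _ ⟨i, hw, rfl⟩]

lemma exp_sub [AddCommGroup V] [Module ℝ V] (D : FinDist α) (f g : α → V) :
    D.exp (fun a => f a - g a) = D.exp f - D.exp g := by
  simp only [exp, smul_sub, sum_sub_distrib]

lemma map_exp [AddCommMonoid V] [Module ℝ V] [AddCommMonoid V'] [Module ℝ V']
    {F : Type*} [FunLike F V V'] [LinearMapClass F ℝ V V'] (g : F) (D : FinDist α) (f : α → V) :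
    g (D.exp f) = D.exp (fun a => g (f a)) := by
  simp only [exp, map_sum, map_smul]

lemma norm_exp_le [SeminormedAddCommGroup V] [NormedSpace ℝ V] (D : FinDist α) {f : α → V}
    {c : ℝ} (hf : ∀ a ∈ D.support, ‖f a‖ ≤ c) : ‖D.exp f‖ ≤ c :=
  calc ‖D.exp f‖ ≤ ∑ i, D.w i * ‖f (D.pt i)‖ :=
        (norm_sum_le _ _).trans_eq <| sum_congr rfl fun i _ => by
          rw [norm_smul, Real.norm_of_nonneg (D.w_nonneg i)]
    _ ≤ ∑ i, D.w i * c := sum_le_sum fun i _ => by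
        by_cases hw : D.w i = 0
        · simp [hw]
        · exact mul_le_mul_of_nonneg_left (hf _ ⟨i, hw, rfl⟩) (D.w_nonneg i)
    _ = c := by rw [← sum_mul, D.w_sum, one_mul]

variable {H : Type*} [NormedAddCommGroup H] [InnerProductSpace ℝ H]

lemma inner_exp (D : FinDist α) (u : H) (f : α → H) :
    ⟪u, D.exp f⟫ = D.exp (fun a => ⟪u, f a⟫) :=
  map_exp (innerSL ℝ u) D f

lemma inner_exp_apply_sub_eq [NormedAddCommGroup V] [NormedSpace ℝ V] {Y : Type*}
    (D : FinDist V) (μ : V → FinDist Y) (s : Y → V) (hμ : ∀ p ∈ D.support, (μ p).exp s = p)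
    (A : V → V →L[ℝ] H) (h : H) (z : V) :
    ⟪h, D.exp (fun p => A p (z - p))⟫ =
      D.exp (fun p => ⟪h, A p z⟫) - D.exp (fun p => (μ p).exp (fun y => ⟪h, A p (s y)⟫)) := by
  rw [← exp_sub, inner_exp]
  refine D.exp_congr fun p hp => ?_
  rw [← inner_exp, ← map_exp (A p) (μ p) s, hμ p hp, map_sub, inner_sub_right]

lemma norm_sq_exp_apply_sub_le [NormedAddCommGroup V] [NormedSpace ℝ V] (D : FinDist V)
    (A : V → V →L[ℝ] H) {z : V} {r G : ℝ} (hG : 0 ≤ G) (hz : ‖z‖ ≤ r)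
    (hp : ∀ p ∈ D.support, ‖p‖ ≤ r) (hA : ∀ p ∈ D.support, ‖A p‖ ^ 2 ≤ G) :
    ‖D.exp (fun p => A p (z - p))‖ ^ 2 ≤ 4 * r ^ 2 * G := by
  have hexp : ‖D.exp (fun p => A p (z - p))‖ ≤ √G * (2 * r) := D.norm_exp_le fun p hpD =>
    calc ‖A p (z - p)‖ ≤ ‖A p‖ * ‖z - p‖ := (A p).le_opNorm _
      _ ≤ √G * (2 * r) := by
        gcongr
        · exact Real.le_sqrt_of_sq_le (hA p hpD)
        · linarith [norm_sub_le z p, hp p hpD]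
  calc ‖D.exp (fun p => A p (z - p))‖ ^ 2 ≤ (√G * (2 * r)) ^ 2 := by gcongr
    _ = 4 * r ^ 2 * G := by rw [mul_pow, Real.sq_sqrt hG]; ring

end FinDist

theorem norm_sq_sum_range_le_of_inner_le {H : Type*} [NormedAddCommGroup H] [InnerProductSpace ℝ H]
    (w : ℕ → H) {c B : ℝ} (T : ℕ) (hinner : ∀ t < T, ⟪∑ τ ∈ range t, w τ, w t⟫ ≤ c)
    (hw : ∀ t < T, ‖w t‖ ^ 2 ≤ B) :
    ‖∑ t ∈ range T, w t‖ ^ 2 ≤ T * (2 * c + B) := by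
  induction T with
  | zero => simp
  | succ T ih =>
    have hT := ih (fun t ht => hinner t (by omega)) (fun t ht => hw t (by omega))
    rw [sum_range_succ, norm_add_sq_real]
    push_cast
    linarith [hinner T T.lt_succ_self, hw T T.lt_succ_self]

section MomentStatistic

variable {d : ℕ}

lemma norm_sVec_sq (y : EuclideanSpace ℝ (Fin d)) :
    ‖sVec d y‖ ^ 2 = ‖y‖ ^ 2 + (‖y‖ ^ 2) ^ 2 := by
  rw [WithLp.prod_norm_sq_eq_of_L2]
  congr 1
  change ‖((sVec d y).ofLp.2 : EuclideanSpace ℝ (Fin d × Fin d))‖ ^ 2 = _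
  rw [EuclideanSpace.norm_sq_eq, EuclideanSpace.norm_sq_eq, sq, sum_mul_sum,
    Fintype.sum_prod_type]
  refine sum_congr rfl fun i _ => sum_congr rfl fun j _ => ?_
  change ‖y i * y j‖ ^ 2 = _
  simp only [Real.norm_eq_abs, sq_abs]
  ring

lemma norm_sVec_le (y : EuclideanSpace ℝ (Fin d)) (hy : ‖y‖ ≤ 1) : ‖sVec d y‖ ≤ √2 :=
  Real.le_sqrt_of_sq_le <| by
    rw [norm_sVec_sq]
    have : ‖y‖ ^ 2 ≤ 1 := by nlinarith [norm_nonneg y]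
    nlinarith [sq_nonneg (‖y‖ ^ 2)]

lemma sVec_mem_ballMomentSet (y : EuclideanSpace ℝ (Fin d)) (hy : ‖y‖ ≤ 1) :
    sVec d y ∈ ballMomentSet d :=
  ⟨Measure.dirac y, inferInstance, by simp [hy], by rw [integral_dirac]; rfl,
    fun i j => by rw [integral_dirac]; rfl⟩

end MomentStatistic

theorem stmt_9_general
    {H : Type*} [NormedAddCommGroup H] [InnerProductSpace ℝ H]
    {X : Type*} {d : ℕ}
    (Φ : X → Wspace d → (Wspace d →L[ℝ] H))
    (G : ℝ) (hG : ∀ (x : X), ∀ p ∈ ballMomentSet d, ‖Φ x p‖ ^ 2 ≤ G)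
    (T : ℕ)
    (x : ℕ → X) (y : ℕ → EuclideanSpace ℝ (Fin d)) (hy : ∀ t < T, ‖y t‖ ≤ 1)
    (D : ℕ → FinDist (Wspace d))
    (hD : ∀ t < T, (D t).support ⊆ ballMomentSet d)
    (ε : ℕ → ℝ) (hεle : ∀ t < T, ε t ≤ 4 * G)
    (hEVI : ∀ t < T, ∀ z' ∈ ballMomentSet d,
      (D t).exp (fun p =>
        (⟪(∑ τ ∈ Finset.range t,
            (D τ).exp (fun q => Φ (x τ) q (sVec d (y τ) - q))),
          Φ (x t) p (z' - p)⟫)) ≤ ε t)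
    (μ : ℕ → Wspace d → FinDist (EuclideanSpace ℝ (Fin d)))
    (hμY : ∀ t < T, ∀ p ∈ (D t).support, ∀ k, ‖(μ t p).pt k‖ ≤ 1)
    (hμ : ∀ t < T, ∀ p ∈ (D t).support, (μ t p).exp (fun y' => sVec d y') = p)
    (h : H) :
    |(∑ t ∈ Finset.range T, (D t).exp (fun p => (⟪h, Φ (x t) p (sVec d (y t))⟫)))
      - (∑ t ∈ Finset.range T, (D t).exp (fun p =>
          (μ t p).exp (fun y' => (⟪h, Φ (x t) p (sVec d y')⟫))))| ≤
      4 * ‖h‖ * Real.sqrt ((T : ℝ) * G) := by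
  set w : ℕ → H := fun t => (D t).exp (fun q => Φ (x t) q (sVec d (y t) - q))
  have hG0 : 0 ≤ G := (sq_nonneg _).trans (hG (x 0) _ (sVec_mem_ballMomentSet 0 (by simp)))
  have hgap : ∑ t ∈ range T, (D t).exp (fun p => ⟪h, Φ (x t) p (sVec d (y t))⟫) -
      ∑ t ∈ range T, (D t).exp (fun p => (μ t p).exp (fun y' => ⟪h, Φ (x t) p (sVec d y')⟫)) =
      ⟪h, ∑ t ∈ range T, w t⟫ := by
    rw [inner_sum, ← sum_sub_distrib]
    exact sum_congr rfl fun t ht =>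
      ((D t).inner_exp_apply_sub_eq _ _ (hμ t (mem_range.1 ht)) _ h _).symm
  have hinner : ∀ t < T, ⟪∑ τ ∈ range t, w τ, w t⟫ ≤ 4 * G := fun t ht =>
    calc ⟪∑ τ ∈ range t, w τ, w t⟫
        = (D t).exp (fun p => ⟪∑ τ ∈ range t, w τ, Φ (x t) p (sVec d (y t) - p)⟫) :=
          FinDist.inner_exp _ _ _
      _ ≤ ε t := hEVI t ht _ (sVec_mem_ballMomentSet _ (hy t ht))
      _ ≤ 4 * G := hεle t ht
  have hw : ∀ t < T, ‖w t‖ ^ 2 ≤ 4 * √2 ^ 2 * G := fun t ht =>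
    (D t).norm_sq_exp_apply_sub_le _ hG0 (norm_sVec_le _ (hy t ht))
      (fun p hp => hμ t ht p hp ▸ (μ t p).norm_exp_le fun _ ⟨k, _, hk⟩ =>
        hk ▸ norm_sVec_le _ (hμY t ht p hp k))
      (fun p hp => hG _ p (hD t ht hp))
  have hM : ‖∑ t ∈ range T, w t‖ ≤ 4 * √(T * G) := by
    have h16 : √(16 * (T * G)) = 4 * √(T * G) := by
      rw [Real.sqrt_mul' _ (by positivity), show (16 : ℝ) = 4 ^ 2 by norm_num,
        Real.sqrt_sq (by norm_num)]
    rw [← h16]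
    refine Real.le_sqrt_of_sq_le ((norm_sq_sum_range_le_of_inner_le w T hinner hw).trans_eq ?_)
    rw [Real.sq_sqrt zero_le_two]
    ring
  rw [hgap]
  calc |⟪h, ∑ t ∈ range T, w t⟫| ≤ ‖h‖ * ‖∑ t ∈ range T, w t‖ := abs_real_inner_le_norm _ _
    _ ≤ ‖h‖ * (4 * √(T * G)) := by gcongr
    _ = 4 * ‖h‖ * √(T * G) := by ring

/-- Corollary 4.9: indistinguishability with respect to first
and second moments on the unit ball.  With targets `s(y_t) = (y_t, y_t y_tᵀ)`,
EVI tolerances `ε_t ≤ 4G`, and generating measures on the unit ball matching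
the forecast moments, every distinguisher `f(x,p,y) = ⟪h, Φ(x,p)(s(y))⟫`
satisfies `OIGap_T(f) ≤ 4 ‖h‖ sqrt(T G)`. -/
theorem stmt_9
    {H : Type*} [NormedAddCommGroup H] [InnerProductSpace ℝ H] [CompleteSpace H]
    {X : Type*} [Nonempty X] {d : ℕ} (hd : 1 ≤ d)
    (Φ : X → Wspace d → (Wspace d →L[ℝ] H))
    (G : ℝ) (hG : ∀ (x : X), ∀ p ∈ ballMomentSet d, ‖Φ x p‖ ^ 2 ≤ G)
    (T : ℕ) (hT : 1 ≤ T)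
    (x : ℕ → X) (y : ℕ → EuclideanSpace ℝ (Fin d)) (hy : ∀ t < T, ‖y t‖ ≤ 1)
    (D : ℕ → FinDist (Wspace d))
    (hD : ∀ t < T, (D t).support ⊆ ballMomentSet d)
    (ε : ℕ → ℝ) (hε : ∀ t < T, 0 ≤ ε t) (hεle : ∀ t < T, ε t ≤ 4 * G)
    (hEVI : ∀ t < T, ∀ z' ∈ ballMomentSet d,
      (D t).exp (fun p =>
        (⟪(∑ τ ∈ Finset.range t,
            (D τ).exp (fun q => Φ (x τ) q (sVec d (y τ) - q))),
          Φ (x t) p (z' - p)⟫)) ≤ ε t)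
    (μ : ℕ → Wspace d → FinDist (EuclideanSpace ℝ (Fin d)))
    (hμY : ∀ t < T, ∀ p ∈ (D t).support, ∀ k, ‖(μ t p).pt k‖ ≤ 1)
    (hμ : ∀ t < T, ∀ p ∈ (D t).support, (μ t p).exp (fun y' => sVec d y') = p)
    (h : H) :
    |(∑ t ∈ Finset.range T, (D t).exp (fun p => (⟪h, Φ (x t) p (sVec d (y t))⟫)))
      - (∑ t ∈ Finset.range T, (D t).exp (fun p =>
          (μ t p).exp (fun y' => (⟪h, Φ (x t) p (sVec d y')⟫))))| ≤
      4 * ‖h‖ * Real.sqrt ((T : ℝ) * G) :=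
  stmt_9_general Φ G hG T x y hy D hD ε hεle hEVI μ hμY hμ h
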